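/- Let {S_i}_{i∈I} be a finite family of communicating systems over pairwise disjoint participant sets, let H = {h_i}_{i∈I} be a set of interfaces for it such that every interface h_i has no mixed states, let CM be a connection model for H, and let K be a connection policy for H complying with CM. If every S_i (i ∈ I) satisfies the progress property and K satisfies the progress property, then the multicomposition MC({S_i}_{i∈I}, K) satisfies the progress property. -/

import Mathlib

namespace CFSM

/-- Direction of a communication action: output (`!`) or input (`?`). -/
inductive Dir : Type where
  | out : Dir
  | inp : Dir
deriving DecidableEq

instance instFintypeDir : Fintype Dir :=
  ⟨{Dir.out, Dir.inp}, fun x => by cases x <;> simp⟩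

/-- An action `pq!a` (output) or `pq?a` (input) over participants `P` and messages `A`:
`snd` is the sender `p`, `rcv` the receiver `q`, `msg` the message `a`. -/
structure Act (P : Type) (A : Type) : Type where
  snd : P
  rcv : P
  dir : Dir
  msg : A

instance {P A : Type} [Finite P] [Finite A] : Finite (Act P A) :=
  Finite.of_injective (fun l => (l.snd, l.rcv, l.dir, l.msg))
    (fun a b h => by
      cases a; cases b
      simp only [Prod.mk.injEq] at h
      obtain ⟨h1, h2, h3, h4⟩ := h
      subst h1; subst h2; subst h3; subst h4; rfl)

/-- The subject of an action: the sender of an output, the receiver of an input. -/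
def Act.subject {P A : Type} (l : Act P A) : P :=
  match l.dir with
  | .out => l.snd
  | .inp => l.rcv

/-- A communicating system over participants `P` and messages `A`:
one machine (state type, initial state and transition relation) per participant. -/
structure CS (P : Type) (A : Type) : Type 1 where
  St : P → Type
  init : ∀ p, St p
  delta : ∀ p, Set (St p × Act P A × St p)

/-- All actions of the machine of participant `p` have subject `p`
(the name of the machine) and distinct endpoints. -/
def CS.WellFormed {P A : Type} (S : CS P A) : Prop :=
  ∀ p t, t ∈ S.delta p → ((t.2.1 : Act P A).subject = p ∧ t.2.1.snd ≠ t.2.1.rcv)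

/-- A configuration: a local state for each machine and a FIFO buffer
for each ordered pair of participants. -/
structure Config {P A : Type} (S : CS P A) : Type where
  st : ∀ p, S.St p
  ch : P → P → List A

/-- The initial configuration: all machines in their initial state, all channels empty. -/
def CS.initConfig {P A : Type} (S : CS P A) : Config S :=
  ⟨S.init, fun _ _ => []⟩

/-- The labelled transition relation between configurations. -/
def StepL {P A : Type} (S : CS P A) (c : Config S) (l : Act P A) (c' : Config S) : Prop :=
  match l.dir with
  | .out =>
      (c.st l.snd, l, c'.st l.snd) ∈ S.delta l.snd ∧
      (∀ p, p ≠ l.snd → c'.st p = c.st p) ∧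
      c'.ch l.snd l.rcv = c.ch l.snd l.rcv ++ [l.msg] ∧
      (∀ p q, (p, q) ≠ (l.snd, l.rcv) → c'.ch p q = c.ch p q)
  | .inp =>
      (c.st l.rcv, l, c'.st l.rcv) ∈ S.delta l.rcv ∧
      (∀ p, p ≠ l.rcv → c'.st p = c.st p) ∧
      c.ch l.snd l.rcv = l.msg :: c'.ch l.snd l.rcv ∧
      (∀ p q, (p, q) ≠ (l.snd, l.rcv) → c'.ch p q = c.ch p q)

/-- Unlabelled transition relation. -/
def Step {P A : Type} (S : CS P A) (c c' : Config S) : Prop :=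
  ∃ l, StepL S c l c'

/-- Reachability between configurations. -/
def Reach {P A : Type} (S : CS P A) : Config S → Config S → Prop :=
  Relation.ReflTransGen (Step S)

/-- The set of configurations reachable from the initial configuration. -/
def RC {P A : Type} (S : CS P A) : Set (Config S) :=
  {c | Reach S S.initConfig c}

/-- A local state is final if it has no outgoing transition. -/
def FinalSt {Q P A : Type} (δ : Set (Q × Act P A × Q)) (q : Q) : Prop :=
  ∀ l q', (q, l, q') ∉ δ

/-- A local state is receiving if it is not final and all its outgoing
transitions are labelled with input actions. -/
def ReceivingSt {Q P A : Type} (δ : Set (Q × Act P A × Q)) (q : Q) : Prop :=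
  (∃ l q', (q, l, q') ∈ δ) ∧ ∀ l q', (q, l, q') ∈ δ → (l : Act P A).dir = Dir.inp

/-- A local state is mixed if it has at least one outgoing output-labelled
transition and at least one outgoing input-labelled transition. -/
def MixedSt {Q P A : Type} (δ : Set (Q × Act P A × Q)) (q : Q) : Prop :=
  (∃ l q', (q, l, q') ∈ δ ∧ (l : Act P A).dir = Dir.out) ∧
  (∃ l q', (q, l, q') ∈ δ ∧ (l : Act P A).dir = Dir.inp)

/-- A machine has no mixed states. -/
def NoMixed {Q P A : Type} (δ : Set (Q × Act P A × Q)) : Prop :=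
  ∀ q, ¬ MixedSt δ q

/-- Deadlock configuration: all channels empty but all machines in receiving states. -/
def DeadlockConfig {P A : Type} (S : CS P A) (c : Config S) : Prop :=
  (∀ p q, c.ch p q = []) ∧ ∀ p, ReceivingSt (S.delta p) (c.st p)

def DeadlockFree {P A : Type} (S : CS P A) : Prop :=
  ∀ c ∈ RC S, ¬ DeadlockConfig S c

/-- Orphan-message configuration: all machines final but some channel nonempty. -/
def OrphanConfig {P A : Type} (S : CS P A) (c : Config S) : Prop :=
  (∀ p, FinalSt (S.delta p) (c.st p)) ∧ ∃ p q, c.ch p q ≠ []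

def OrphanFree {P A : Type} (S : CS P A) : Prop :=
  ∀ c ∈ RC S, ¬ OrphanConfig S c

/-- Unspecified reception configuration: some machine `r` is in a receiving state and,
for every input transition of `r`, the corresponding channel is nonempty with a
first element different from the expected message. -/
def URConfig {P A : Type} (S : CS P A) (c : Config S) : Prop :=
  ∃ r, ReceivingSt (S.delta r) (c.st r) ∧
    ∀ s a q', (c.st r, Act.mk s r Dir.inp a, q') ∈ S.delta r →
      (c.ch s r ≠ [] ∧ ¬ ∃ w, c.ch s r = a :: w)

def ReceptionErrorFree {P A : Type} (S : CS P A) : Prop :=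
  ∀ c ∈ RC S, ¬ URConfig S c

/-- Progress: every reachable configuration has an outgoing transition or all
machines are in final states. -/
def ProgressProp {P A : Type} (S : CS P A) : Prop :=
  ∀ c ∈ RC S, (∃ c', Step S c c') ∨ ∀ p, FinalSt (S.delta p) (c.st p)

/-- `p`-lock configuration: `p` is in a receiving state and never occurs as the
subject of an action in any transition sequence from `c`. -/
def PLockConfig {P A : Type} (S : CS P A) (c : Config S) (p : P) : Prop :=
  ReceivingSt (S.delta p) (c.st p) ∧
  ∀ c1 l c2, Reach S c c1 → StepL S c1 l c2 → l.subject ≠ p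

def LockFree {P A : Type} (S : CS P A) : Prop :=
  ∀ c ∈ RC S, ∀ p, ¬ PLockConfig S c p

section Composition

variable {I : Type} {P : I → Type} {A : Type}

/-- Messages occurring in input actions of the machine of `p`. -/
def inMsgs {Pp A : Type} (S : CS Pp A) (p : Pp) : Set A :=
  {a | ∃ q s q', (q, Act.mk s p Dir.inp a, q') ∈ S.delta p}

/-- Messages occurring in output actions of the machine of `p`. -/
def outMsgs {Pp A : Type} (S : CS Pp A) (p : Pp) : Set A :=
  {a | ∃ q r q', (q, Act.mk p r Dir.out a, q') ∈ S.delta p}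

/-- `CM` is a connection model for the interfaces `hh i` of the family `S`
(the interface `h_i` is represented by its index `i`). -/
def IsConnModel (S : ∀ i, CS (P i) A) (hh : ∀ i, P i) (CM : Set (I × A × I)) : Prop :=
  ∀ i a,
    (a ∈ inMsgs (S i) (hh i) →
      ∃ j, j ≠ i ∧ a ∈ outMsgs (S j) (hh j) ∧ (i, a, j) ∈ CM) ∧
    (a ∈ outMsgs (S i) (hh i) →
      ∃ j, j ≠ i ∧ a ∈ inMsgs (S j) (hh j) ∧ (j, a, i) ∈ CM)

/-- `CM` is a strong connection model: additionally the connecting partner is unique. -/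
def IsStrongConnModel (S : ∀ i, CS (P i) A) (hh : ∀ i, P i) (CM : Set (I × A × I)) : Prop :=
  IsConnModel S hh CM ∧
  ∀ i a,
    (a ∈ inMsgs (S i) (hh i) → ∃! j, (i, a, j) ∈ CM) ∧
    (a ∈ outMsgs (S i) (hh i) → ∃! j, (j, a, i) ∈ CM)

/-- Conditions (*) and (**) for a candidate transition relation `d` of the local
connection policy of interface `hh i` (the name `k_i` is represented by `i`). -/
def PolicySat (S : ∀ i, CS (P i) A) (hh : ∀ i, P i) (CM : Set (I × A × I)) (i : I)
    (d : Set ((S i).St (hh i) × Act I A × (S i).St (hh i))) : Prop :=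
  (∀ q r a q', (q, Act.mk r (hh i) Dir.inp a, q') ∈ (S i).delta (hh i) →
      ∃ j, j ≠ i ∧ (i, a, j) ∈ CM ∧ (q, Act.mk i j Dir.out a, q') ∈ d) ∧
  (∀ q r a q', (q, Act.mk (hh i) r Dir.out a, q') ∈ (S i).delta (hh i) →
      ∃ j, j ≠ i ∧ (j, a, i) ∈ CM ∧ (q, Act.mk j i Dir.inp a, q') ∈ d)

/-- `d` belongs to the local connection policy set `IS(M_{h_i}, CM)`:
it is a minimal relation satisfying (*) and (**).  (The states `q̇` of the
policy machine are identified with the states `q` of `M_{h_i}`.) -/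
def InIS (S : ∀ i, CS (P i) A) (hh : ∀ i, P i) (CM : Set (I × A × I)) (i : I)
    (d : Set ((S i).St (hh i) × Act I A × (S i).St (hh i))) : Prop :=
  PolicySat S hh CM i d ∧ ∀ d', d' ⊆ d → PolicySat S hh CM i d' → d' = d

/-- The communicating system (over the participant type `I` of names `k_i`)
determined by the family of transition relations `Kd` of a connection policy. -/
def policyCS (S : ∀ i, CS (P i) A) (hh : ∀ i, P i)
    (Kd : ∀ i, Set ((S i).St (hh i) × Act I A × (S i).St (hh i))) : CS I A where
  St := fun i => (S i).St (hh i)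
  init := fun i => (S i).init (hh i)
  delta := Kd

/-- `Kd` is a connection policy for the interfaces `hh` complying with `CM`. -/
def IsConnPolicy (S : ∀ i, CS (P i) A) (hh : ∀ i, P i) (CM : Set (I × A × I))
    (Kd : ∀ i, Set ((S i).St (hh i) × Act I A × (S i).St (hh i))) : Prop :=
  ∀ i, InIS S hh CM i (Kd i)

/-- States of the gateway for interface `hh i`: the original states plus one
fresh state per transition of `M_{h_i}`. -/
abbrev GWState (S : ∀ i, CS (P i) A) (hh : ∀ i, P i) (i : I) : Type :=
  (S i).St (hh i) ⊕ ((S i).St (hh i) × Act (P i) A × (S i).St (hh i))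

/-- Lifting of a local action of system `i` to the composed participant type. -/
def liftAct (i : I) (l : Act (P i) A) : Act ((j : I) × P j) A :=
  Act.mk ⟨i, l.snd⟩ ⟨i, l.rcv⟩ l.dir l.msg

/-- Transition relation of the gateway `M_{h_i} ⟲ M_{k_i}`. -/
def GWdelta (S : ∀ i, CS (P i) A) (hh : ∀ i, P i)
    (Kd : ∀ i, Set ((S i).St (hh i) × Act I A × (S i).St (hh i))) (i : I) :
    Set (GWState S hh i × Act ((j : I) × P j) A × GWState S hh i) :=
  {x | ∃ q a q',
    (∃ s r, (q, Act.mk (hh i) s Dir.out a, q') ∈ (S i).delta (hh i) ∧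
        (q, Act.mk r i Dir.inp a, q') ∈ Kd i ∧
        (x = (Sum.inl q, Act.mk ⟨r, hh r⟩ ⟨i, hh i⟩ Dir.inp a,
              Sum.inr (q, Act.mk (hh i) s Dir.out a, q')) ∨
         x = (Sum.inr (q, Act.mk (hh i) s Dir.out a, q'),
              Act.mk ⟨i, hh i⟩ ⟨i, s⟩ Dir.out a, Sum.inl q'))) ∨
    (∃ s r, (q, Act.mk s (hh i) Dir.inp a, q') ∈ (S i).delta (hh i) ∧
        (q, Act.mk i r Dir.out a, q') ∈ Kd i ∧
        (x = (Sum.inl q, Act.mk ⟨i, s⟩ ⟨i, hh i⟩ Dir.inp a,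
              Sum.inr (q, Act.mk s (hh i) Dir.inp a, q')) ∨
         x = (Sum.inr (q, Act.mk s (hh i) Dir.inp a, q'),
              Act.mk ⟨i, hh i⟩ ⟨r, hh r⟩ Dir.out a, Sum.inl q')))}

open Classical in
/-- State type of the machine of participant `⟨i, p⟩` in the multicomposition:
the gateway state type if `p` is the interface of system `i`, the original
state type otherwise. -/
noncomputable def MCSt (S : ∀ i, CS (P i) A) (hh : ∀ i, P i) (x : (i : I) × P i) : Type :=
  if x.2 = hh x.1 then GWState S hh x.1 else (S x.1).St x.2

/-- The multicomposition `MC({S_i}, K)`: all machines of the single systems,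
with the machine of each interface `hh i` replaced by its gateway. -/
noncomputable def MC (S : ∀ i, CS (P i) A) (hh : ∀ i, P i)
    (Kd : ∀ i, Set ((S i).St (hh i) × Act I A × (S i).St (hh i))) :
    CS ((i : I) × P i) A where
  St := MCSt S hh
  init := fun x => by
    by_cases hp : x.2 = hh x.1
    · have h : MCSt S hh x = GWState S hh x.1 := by simp [MCSt, hp]
      rw [h]; exact Sum.inl ((S x.1).init (hh x.1))
    · have h : MCSt S hh x = (S x.1).St x.2 := by simp [MCSt, hp]
      rw [h]; exact (S x.1).init x.2
  delta := fun x => by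
    by_cases hp : x.2 = hh x.1
    · have h : MCSt S hh x = GWState S hh x.1 := by simp [MCSt, hp]
      rw [h]; exact GWdelta S hh Kd x.1
    · have h : MCSt S hh x = (S x.1).St x.2 := by simp [MCSt, hp]
      rw [h]
      exact {t | ∃ q l q', (q, l, q') ∈ (S x.1).delta x.2 ∧ t = (q, liftAct x.1 l, q')}

/-- The state of the gateway of interface `hh i` in a configuration of the
multicomposition, as an element of `GWState`. -/
noncomputable def toGW (S : ∀ i, CS (P i) A) (hh : ∀ i, P i) (i : I)
    (x : MCSt S hh ⟨i, hh i⟩) : GWState S hh i :=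
  cast (by simp [MCSt]) x

/-- The state of a non-interface participant in a configuration of the
multicomposition, as an element of its original state type. -/
noncomputable def toLoc (S : ∀ i, CS (P i) A) (hh : ∀ i, P i) {i : I} {p : P i}
    (hp : p ≠ hh i) (x : MCSt S hh ⟨i, p⟩) : (S i).St p :=
  cast (by simp [MCSt, hp]) x

/-- Projection of a configuration of the multicomposition to system `S i`,
assuming the gateway state of `hh i` is not a fresh intermediate state
(i.e. it is of the form `Sum.inl q`). -/
noncomputable def projSys (S : ∀ i, CS (P i) A) (hh : ∀ i, P i)
    (Kd : ∀ i, Set ((S i).St (hh i) × Act I A × (S i).St (hh i)))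
    (i : I) (s : Config (MC S hh Kd))
    (hq : ∃ q, toGW S hh i (s.st ⟨i, hh i⟩) = Sum.inl q) : Config (S i) where
  st := fun p => by
    by_cases hp : p = hh i
    · rw [hp]; exact hq.choose
    · exact toLoc S hh hp (s.st ⟨i, p⟩)
  ch := fun p q => s.ch ⟨i, p⟩ ⟨i, q⟩

/-- Projection of a configuration of the multicomposition to the connection
policy `K`, assuming no gateway is in a fresh intermediate state. -/
noncomputable def projPolicy (S : ∀ i, CS (P i) A) (hh : ∀ i, P i)
    (Kd : ∀ i, Set ((S i).St (hh i) × Act I A × (S i).St (hh i)))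
    (s : Config (MC S hh Kd))
    (hq : ∀ i, ∃ q, toGW S hh i (s.st ⟨i, hh i⟩) = Sum.inl q) :
    Config (policyCS S hh Kd) where
  st := fun i => (hq i).choose
  ch := fun i j => s.ch ⟨i, hh i⟩ ⟨j, hh j⟩

end Composition

end CFSM


/-!
A gateway state stands for a pair of states, one of `M_{h_i}` and one of the policy machine
`M_{k_i}`, and every gateway transition moves exactly one of the two. So a reachable
configuration of the multicomposition projects to reachable configurations of every `S_i` and
of `K`. A gateway in an intermediate state can always forward its message; otherwise both
projections see the same interface states. If some `S_i` is not finished, its progress gives a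
move the multicomposition can mirror, unless it is an output of `h_i`. That message can be taken
by `M_{k_i}`, so `K` is not finished either and moves. An input of `K` is mirrored by a gateway;
an output of `K` answers, by minimality of the policy, an input that `h_j` can perform, and since
`h_j` has no mixed states the move that `S_j` then makes is not an output of `h_j`.
-/
namespace CFSM

section Generic

variable {P Q A : Type} {S : CS P A}

theorem Config.ext {c c' : Config S} (hst : c.st = c'.st) (hch : c.ch = c'.ch) : c = c' := by
  cases c; cases c'; cases hst; cases hch; rfl

def Act.map (e : Q → P) (l : Act Q A) : Act P A :=
  ⟨e l.snd, e l.rcv, l.dir, l.msg⟩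

theorem Act.subject_map (e : Q → P) (l : Act Q A) : (l.map e).subject = e l.subject := by
  unfold Act.subject Act.map; cases l.dir <;> rfl

theorem Act.subject_eq_snd_or_rcv (l : Act P A) : l.subject = l.snd ∨ l.subject = l.rcv := by
  unfold Act.subject; cases l.dir <;> simp

def ChanStep (l : Act P A) (w w' : P → P → List A) : Prop :=
  (match l.dir with
    | .out => w' l.snd l.rcv = w l.snd l.rcv ++ [l.msg]
    | .inp => w l.snd l.rcv = l.msg :: w' l.snd l.rcv) ∧
  ∀ p q, (p, q) ≠ (l.snd, l.rcv) → w' p q = w p q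

theorem ChanStep.comap {e : Q → P} (he : Function.Injective e) {l : Act Q A}
    {w w' : P → P → List A} (h : ChanStep (l.map e) w w') :
    ChanStep l (fun p q => w (e p) (e q)) (fun p q => w' (e p) (e q)) :=
  ⟨h.1, fun p q hpq => h.2 _ _ fun he' => hpq (by
    simp only [Act.map, Prod.mk.injEq, he.eq_iff] at he'; rw [he'.1, he'.2])⟩

theorem ChanStep.comap_eq {e : Q → P} {l : Act P A} {w w' : P → P → List A}
    (h : ChanStep l w w') (hl : ∀ p q, (e p, e q) ≠ (l.snd, l.rcv)) :
    (fun p q => w' (e p) (e q)) = fun p q => w (e p) (e q) := by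
  funext p q; exact h.2 _ _ (hl p q)

theorem stepL_iff {c c' : Config S} {l : Act P A} :
    StepL S c l c' ↔ (c.st l.subject, l, c'.st l.subject) ∈ S.delta l.subject ∧
      (∀ p, p ≠ l.subject → c'.st p = c.st p) ∧ ChanStep l c.ch c'.ch := by
  obtain ⟨s, r, d, a⟩ := l
  cases d <;> rfl

theorem stepL_of_mem {c c' : Config S} {l : Act P A} {p : P} (hp : l.subject = p)
    (hδ : (c.st p, l, c'.st p) ∈ S.delta p) (hst : ∀ q, q ≠ p → c'.st q = c.st q)
    (hch : ChanStep l c.ch c'.ch) : StepL S c l c' := by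
  subst hp; exact stepL_iff.2 ⟨hδ, hst, hch⟩

namespace StepL

variable {c c' : Config S} {l : Act P A}

theorem mem_delta (h : StepL S c l c') {p : P} (hp : l.subject = p) :
    (c.st p, l, c'.st p) ∈ S.delta p := by
  subst hp; exact (stepL_iff.1 h).1

theorem st_eq (h : StepL S c l c') {p : P} (hp : p ≠ l.subject) : c'.st p = c.st p :=
  (stepL_iff.1 h).2.1 p hp

theorem chanStep (h : StepL S c l c') : ChanStep l c.ch c'.ch :=
  (stepL_iff.1 h).2.2

theorem ch_eq (h : StepL S c l c') {p q : P} (hp : p ≠ l.subject) (hq : q ≠ l.subject) :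
    c'.ch p q = c.ch p q :=
  h.chanStep.2 p q <| by
    rcases l.subject_eq_snd_or_rcv with e | e <;> rw [e] at hp hq <;> simp [hp, hq]

theorem ch_eq_cons (h : StepL S c l c') (hl : l.dir = .inp) :
    c.ch l.snd l.rcv = l.msg :: c'.ch l.snd l.rcv := by
  obtain ⟨s, r, d, a⟩ := l
  subst hl; exact h.2.2.1

end StepL

theorem exists_step_of_mem {c : Config S} {l : Act P A} {p : P} (hp : l.subject = p)
    {y : S.St p} (hδ : (c.st p, l, y) ∈ S.delta p)
    (hch : l.dir = .inp → ∃ w, c.ch l.snd l.rcv = l.msg :: w) : ∃ c', Step S c c' := by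
  classical
  have hst : (Function.update c.st p y) p = y := Function.update_self ..
  obtain ⟨s, r, d, a⟩ := l
  cases d with
  | out =>
    refine ⟨⟨Function.update c.st p y, fun p q => if (p, q) = (s, r) then c.ch s r ++ [a]
      else c.ch p q⟩, _, stepL_of_mem hp (by dsimp only; rw [hst]; exact hδ)
      (fun q hq => Function.update_of_ne hq _ _) ⟨by simp, fun p q hpq => if_neg hpq⟩⟩
  | inp =>
    obtain ⟨w, hw⟩ := hch rfl
    refine ⟨⟨Function.update c.st p y, fun p q => if (p, q) = (s, r) then w else c.ch p q⟩,
      _, stepL_of_mem hp (by dsimp only; rw [hst]; exact hδ)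
      (fun q hq => Function.update_of_ne hq _ _) ⟨by simpa using hw, fun p q hpq => if_neg hpq⟩⟩

theorem map_mem_RC {T : CS Q A} (f : Config S → Config T) (h0 : f S.initConfig = T.initConfig)
    (hf : ∀ c c', Step S c c' → Relation.ReflGen (Step T) (f c) (f c')) {c : Config S}
    (hc : c ∈ RC S) : f c ∈ RC T := by
  induction hc with
  | refl => rw [h0]; exact .refl
  | tail _ hstep ih => exact ih.trans (hf _ _ hstep).to_reflTransGen

theorem st_eq_init_or_mem_delta {c : Config S} (hc : c ∈ RC S) (p : P) :
    c.st p = S.init p ∨ ∃ q l, (q, l, c.st p) ∈ S.delta p := by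
  induction hc with
  | refl => exact .inl rfl
  | tail _ hstep ih =>
    obtain ⟨l, hl⟩ := hstep
    by_cases hp : p = l.subject
    · exact .inr ⟨_, _, hl.mem_delta hp.symm⟩
    · rw [hl.st_eq hp]; exact ih

end Generic

section Multicomposition

variable {I : Type} {P : I → Type} {A : Type} {S : ∀ i, CS (P i) A} {hh : ∀ i, P i}
  {Kd : ∀ i, Set ((S i).St (hh i) × Act I A × (S i).St (hh i))}

theorem MCSt_interface (i : I) : MCSt S hh ⟨i, hh i⟩ = GWState S hh i := by
  simp [MCSt]

theorem MCSt_of_ne {i : I} {p : P i} (hp : p ≠ hh i) : MCSt S hh ⟨i, p⟩ = (S i).St p := by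
  simp [MCSt, hp]

theorem MC_delta_interface_heq (i : I) :
    HEq ((MC S hh Kd).delta ⟨i, hh i⟩) (GWdelta S hh Kd i) := by
  unfold MC; dsimp only; split
  · exact cast_heq _ _
  · contradiction

theorem MC_delta_of_ne_heq {i : I} {p : P i} (hp : p ≠ hh i) :
    HEq ((MC S hh Kd).delta ⟨i, p⟩)
      {t : (S i).St p × Act ((j : I) × P j) A × (S i).St p |
        ∃ q l q', (q, l, q') ∈ (S i).delta p ∧ t = (q, liftAct i l, q')} := by
  unfold MC; dsimp only; split
  · contradiction
  · exact cast_heq _ _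

theorem MC_init_interface_heq (i : I) :
    HEq ((MC S hh Kd).init ⟨i, hh i⟩) (Sum.inl ((S i).init (hh i)) : GWState S hh i) := by
  unfold MC; dsimp only; split
  · exact cast_heq _ _
  · contradiction

theorem MC_init_of_ne_heq {i : I} {p : P i} (hp : p ≠ hh i) :
    HEq ((MC S hh Kd).init ⟨i, p⟩) ((S i).init p) := by
  unfold MC; dsimp only; split
  · contradiction
  · exact cast_heq _ _

theorem mem_of_heq {α β L : Type} (h : α = β) {D : Set (α × L × α)} {G : Set (β × L × β)}
    (hDG : HEq D G) (x y : α) (l : L) : (x, l, y) ∈ D ↔ (cast h x, l, cast h y) ∈ G := by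
  subst h; rw [eq_of_heq hDG]; rfl

noncomputable def ofGW (i : I) (g : GWState S hh i) : MCSt S hh ⟨i, hh i⟩ :=
  cast (MCSt_interface i).symm g

noncomputable def ofLoc {i : I} {p : P i} (hp : p ≠ hh i) (x : (S i).St p) : MCSt S hh ⟨i, p⟩ :=
  cast (MCSt_of_ne hp).symm x

@[simp]
theorem toGW_ofGW (i : I) (g : GWState S hh i) : toGW S hh i (ofGW i g) = g :=
  cast_cast _ _ g

@[simp]
theorem toLoc_ofLoc {i : I} {p : P i} (hp : p ≠ hh i) (x : (S i).St p) :
    toLoc S hh hp (ofLoc hp x) = x :=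
  cast_cast _ _ x

theorem mem_MC_delta_interface {i : I} {x y : (MC S hh Kd).St ⟨i, hh i⟩}
    {l : Act ((j : I) × P j) A} :
    (x, l, y) ∈ (MC S hh Kd).delta ⟨i, hh i⟩ ↔
      (toGW S hh i x, l, toGW S hh i y) ∈ GWdelta S hh Kd i :=
  mem_of_heq (MCSt_interface i) (MC_delta_interface_heq i) x y l

theorem mem_MC_delta_of_ne {i : I} {p : P i} (hp : p ≠ hh i) {x y : (MC S hh Kd).St ⟨i, p⟩}
    {l : Act ((j : I) × P j) A} :
    (x, l, y) ∈ (MC S hh Kd).delta ⟨i, p⟩ ↔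
      ∃ l₀, (toLoc S hh hp x, l₀, toLoc S hh hp y) ∈ (S i).delta p ∧ l = l₀.map (Sigma.mk i) := by
  rw [mem_of_heq (α := (MC S hh Kd).St ⟨i, p⟩) (MCSt_of_ne hp) (MC_delta_of_ne_heq hp)]
  constructor
  · rintro ⟨q, l₀, q', hm, he⟩
    simp only [Prod.mk.injEq] at he
    obtain ⟨rfl, rfl, rfl⟩ := he
    exact ⟨l₀, hm, rfl⟩
  · rintro ⟨l₀, hm, rfl⟩
    exact ⟨_, l₀, _, hm, rfl⟩

theorem toGW_init (i : I) :
    toGW S hh i ((MC S hh Kd).init ⟨i, hh i⟩) = .inl ((S i).init (hh i)) :=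
  eq_of_heq ((cast_heq _ _).trans (MC_init_interface_heq i))

theorem toLoc_init {i : I} {p : P i} (hp : p ≠ hh i) :
    toLoc S hh hp ((MC S hh Kd).init ⟨i, p⟩) = (S i).init p :=
  eq_of_heq ((cast_heq _ _).trans (MC_init_of_ne_heq hp))

def interface {I : Type} {P : I → Type} (hh : ∀ i, P i) (i : I) : (j : I) × P j := ⟨i, hh i⟩

theorem interface_injective : Function.Injective (interface hh) :=
  fun _ _ h => congrArg Sigma.fst h

/-- The state of `M_{h_i}` that a gateway state stands for: in the intermediate state of an
output transition `M_{h_i}` has not yet sent, in that of an input transition it has already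
received. `GWState.policy` is the state of `M_{k_i}`, the other way round. -/
def GWState.sys {i : I} : GWState S hh i → (S i).St (hh i)
  | .inl q => q
  | .inr (q, l, q') =>
    match l.dir with
    | .out => q
    | .inp => q'

def GWState.policy {i : I} : GWState S hh i → (S i).St (hh i)
  | .inl q => q
  | .inr (q, l, q') =>
    match l.dir with
    | .out => q'
    | .inp => q

/-- Each gateway transition is a move of `M_{h_i}` or of `M_{k_i}`, never of both. -/
theorem GWdelta_cases {i : I} {g g' : GWState S hh i} {l : Act ((j : I) × P j) A}
    (h : (g, l, g') ∈ GWdelta S hh Kd i) :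
    (∃ l₀ : Act (P i) A, l₀.subject = hh i ∧ (g.sys, l₀, g'.sys) ∈ (S i).delta (hh i) ∧
      l = l₀.map (Sigma.mk i) ∧ g'.policy = g.policy) ∨
    (∃ lk : Act I A, lk.subject = i ∧ (g.policy, lk, g'.policy) ∈ Kd i ∧
      l = lk.map (interface hh) ∧ g'.sys = g.sys) := by
  simp only [GWdelta, Set.mem_ofPred_eq, Prod.mk.injEq] at h
  obtain ⟨q, a, q', ⟨s, r, hδ, hk, ⟨rfl, rfl, rfl⟩ | ⟨rfl, rfl, rfl⟩⟩ |
    ⟨s, r, hδ, hk, ⟨rfl, rfl, rfl⟩ | ⟨rfl, rfl, rfl⟩⟩⟩ := h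
  · exact .inr ⟨_, rfl, hk, rfl, rfl⟩
  · exact .inl ⟨_, rfl, hδ, rfl, rfl⟩
  · exact .inl ⟨_, rfl, hδ, rfl, rfl⟩
  · exact .inr ⟨_, rfl, hk, rfl, rfl⟩

theorem GWdelta_subject {i : I} {g g' : GWState S hh i} {l : Act ((j : I) × P j) A}
    (h : (g, l, g') ∈ GWdelta S hh Kd i) : l.subject = ⟨i, hh i⟩ := by
  rcases GWdelta_cases h with ⟨l₀, hl₀, -, rfl, -⟩ | ⟨lk, rfl, -, rfl, -⟩
  · rw [Act.subject_map, hl₀]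
  · rw [Act.subject_map]; rfl

theorem GWdelta_exists_out_of_mem_inr {i : I} {g : GWState S hh i}
    {t : (S i).St (hh i) × Act (P i) A × (S i).St (hh i)} {l : Act ((j : I) × P j) A}
    (h : (g, l, .inr t) ∈ GWdelta S hh Kd i) :
    ∃ l' g', (.inr t, l', g') ∈ GWdelta S hh Kd i ∧ l'.dir = .out := by
  obtain ⟨q, a, q', ⟨s, r, hδ, hk, he | he⟩ | ⟨s, r, hδ, hk, he | he⟩⟩ := h <;>
    simp only [Prod.mk.injEq, reduceCtorEq, and_false, Sum.inr.injEq] at he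
  · obtain ⟨-, -, rfl⟩ := he
    exact ⟨_, _, ⟨q, a, q', .inl ⟨s, r, hδ, hk, .inr rfl⟩⟩, rfl⟩
  · obtain ⟨-, -, rfl⟩ := he
    exact ⟨_, _, ⟨q, a, q', .inr ⟨s, r, hδ, hk, .inr rfl⟩⟩, rfl⟩

theorem GWdelta_final_inl {i : I} {q : (S i).St (hh i)} (hq : FinalSt ((S i).delta (hh i)) q) :
    FinalSt (GWdelta S hh Kd i) (.inl q) := by
  intro l g' h
  obtain ⟨q₀, a, q₀', ⟨s, r, hδ, -, he | he⟩ | ⟨s, r, hδ, -, he | he⟩⟩ := h <;>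
    simp only [Prod.mk.injEq, reduceCtorEq, false_and, Sum.inl.injEq] at he
  · exact hq _ _ (he.1 ▸ hδ)
  · exact hq _ _ (he.1 ▸ hδ)

/-- By minimality, every transition of a local connection policy is demanded by (*) or (**). -/
theorem InIS.mem_cases {CM : Set (I × A × I)} {i : I}
    {d : Set ((S i).St (hh i) × Act I A × (S i).St (hh i))} (hK : InIS S hh CM i d)
    {q q' : (S i).St (hh i)} {l : Act I A} (ht : (q, l, q') ∈ d) :
    (∃ j a, l = ⟨i, j, .out, a⟩ ∧ j ≠ i ∧ ∃ r, (q, ⟨r, hh i, .inp, a⟩, q') ∈ (S i).delta (hh i)) ∨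
    (∃ j a, l = ⟨j, i, .inp, a⟩ ∧ j ≠ i ∧
      ∃ r, (q, ⟨hh i, r, .out, a⟩, q') ∈ (S i).delta (hh i)) := by
  by_contra hne
  have hsat : PolicySat S hh CM i (d \ {(q, l, q')}) := by
    refine ⟨fun q₀ r a q₀' hδ => ?_, fun q₀ r a q₀' hδ => ?_⟩
    · obtain ⟨j, hj, hcm, hd⟩ := hK.1.1 q₀ r a q₀' hδ
      refine ⟨j, hj, hcm, hd, fun he => hne (.inl ?_)⟩
      simp only [Set.mem_singleton_iff, Prod.mk.injEq] at he
      obtain ⟨rfl, rfl, rfl⟩ := he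
      exact ⟨j, a, rfl, hj, r, hδ⟩
    · obtain ⟨j, hj, hcm, hd⟩ := hK.1.2 q₀ r a q₀' hδ
      refine ⟨j, hj, hcm, hd, fun he => hne (.inr ?_)⟩
      simp only [Set.mem_singleton_iff, Prod.mk.injEq] at he
      obtain ⟨rfl, rfl, rfl⟩ := he
      exact ⟨j, a, rfl, hj, r, hδ⟩
  rw [← hK.2 _ Set.sdiff_subset hsat] at ht
  exact ht.2 rfl

theorem IsConnPolicy.wellFormed {CM : Set (I × A × I)} (hK : IsConnPolicy S hh CM Kd) :
    (policyCS S hh Kd).WellFormed := by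
  rintro i ⟨q, l, q'⟩ ht
  rcases (hK i).mem_cases ht with ⟨j, a, rfl, hj, -⟩ | ⟨j, a, rfl, hj, -⟩
  · exact ⟨rfl, hj.symm⟩
  · exact ⟨rfl, hj⟩

theorem MC_stepL_cases {c c' : Config (MC S hh Kd)} {l : Act ((j : I) × P j) A}
    (h : StepL (MC S hh Kd) c l c') :
    (∃ i p, ∃ hp : p ≠ hh i, ∃ l₀ : Act (P i) A, l₀.subject = p ∧ l = l₀.map (Sigma.mk i) ∧
      (toLoc S hh hp (c.st ⟨i, p⟩), l₀, toLoc S hh hp (c'.st ⟨i, p⟩)) ∈ (S i).delta p) ∨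
    (∃ i, l.subject = ⟨i, hh i⟩ ∧
      (toGW S hh i (c.st ⟨i, hh i⟩), l, toGW S hh i (c'.st ⟨i, hh i⟩)) ∈ GWdelta S hh Kd i) := by
  rcases hx : l.subject with ⟨i, p⟩
  have hδ := h.mem_delta hx
  by_cases hp : p = hh i
  · subst hp; exact .inr ⟨i, rfl, mem_MC_delta_interface.1 hδ⟩
  · obtain ⟨l₀, hl₀, rfl⟩ := (mem_MC_delta_of_ne hp).1 hδ
    rw [Act.subject_map] at hx
    exact .inl ⟨i, p, hp, l₀, sigma_mk_injective hx, rfl, hl₀⟩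

open Classical in
noncomputable def sysView {i : I} {p : P i} (x : MCSt S hh ⟨i, p⟩) : (S i).St p :=
  if hp : p = hh i then by subst hp; exact (toGW S hh i x).sys else toLoc S hh hp x

noncomputable def sysProj (c : Config (MC S hh Kd)) (i : I) : Config (S i) :=
  ⟨fun p => sysView (c.st ⟨i, p⟩), fun p q => c.ch ⟨i, p⟩ ⟨i, q⟩⟩

noncomputable def polProj (c : Config (MC S hh Kd)) : Config (policyCS S hh Kd) :=
  ⟨fun i => (toGW S hh i (c.st ⟨i, hh i⟩)).policy, fun i j => c.ch ⟨i, hh i⟩ ⟨j, hh j⟩⟩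

@[simp]
theorem sysProj_st_interface (c : Config (MC S hh Kd)) (i : I) :
    (sysProj c i).st (hh i) = (toGW S hh i (c.st ⟨i, hh i⟩)).sys := by
  simp [sysProj, sysView]

theorem sysProj_st_of_ne (c : Config (MC S hh Kd)) {i : I} {p : P i} (hp : p ≠ hh i) :
    (sysProj c i).st p = toLoc S hh hp (c.st ⟨i, p⟩) := by
  simp [sysProj, sysView, hp]

theorem sysProj_st_congr {c c' : Config (MC S hh Kd)} {i : I} {p : P i}
    (h : c'.st ⟨i, p⟩ = c.st ⟨i, p⟩) : (sysProj c' i).st p = (sysProj c i).st p :=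
  congrArg sysView h

theorem polProj_st_congr {c c' : Config (MC S hh Kd)} {i : I}
    (h : c'.st ⟨i, hh i⟩ = c.st ⟨i, hh i⟩) : (polProj c').st i = (polProj c).st i :=
  congrArg (fun x => (toGW S hh i x).policy) h

theorem sysProj_initConfig (i : I) : sysProj (MC S hh Kd).initConfig i = (S i).initConfig := by
  refine Config.ext (funext fun p => ?_) rfl
  by_cases hp : p = hh i
  · subst hp
    rw [sysProj_st_interface]
    simp only [CS.initConfig, toGW_init, GWState.sys]
  · rw [sysProj_st_of_ne _ hp]; exact toLoc_init (Kd := Kd) hp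

theorem polProj_initConfig : polProj (MC S hh Kd).initConfig = (policyCS S hh Kd).initConfig := by
  refine Config.ext (funext fun i => ?_) rfl
  simp only [polProj, CS.initConfig, toGW_init, GWState.policy]
  rfl

theorem sysProj_eq_of_stepL {c c' : Config (MC S hh Kd)} {l : Act ((j : I) × P j) A}
    (h : StepL (MC S hh Kd) c l c') {i : I} (hi : l.subject.1 ≠ i) : sysProj c' i = sysProj c i :=
  have hne (p : P i) : (⟨i, p⟩ : (j : I) × P j) ≠ l.subject := fun he => hi (he ▸ rfl)
  Config.ext (funext fun _ => sysProj_st_congr (h.st_eq (hne _)))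
    (funext fun _ => funext fun _ => h.ch_eq (hne _) (hne _))

theorem polProj_eq_of_stepL {c c' : Config (MC S hh Kd)} {l : Act ((j : I) × P j) A}
    (h : StepL (MC S hh Kd) c l c') (hl : ∀ j, interface hh j ≠ l.subject) :
    polProj c' = polProj c :=
  Config.ext (funext fun _ => polProj_st_congr (h.st_eq (hl _)))
    (funext fun _ => funext fun _ => h.ch_eq (hl _) (hl _))

theorem sysProj_reflGen_of_stepL {CM : Set (I × A × I)} (hK : IsConnPolicy S hh CM Kd)
    {c c' : Config (MC S hh Kd)} {l : Act ((j : I) × P j) A} (h : StepL (MC S hh Kd) c l c')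
    (i : I) : Relation.ReflGen (Step (S i)) (sysProj c i) (sysProj c' i) := by
  by_cases hi : l.subject.1 = i
  swap
  · exact sysProj_eq_of_stepL h hi ▸ .refl
  rcases MC_stepL_cases h with ⟨i₀, p, hp, l₀, rfl, rfl, hδ⟩ | ⟨i₀, hsub, hδ⟩
  · obtain rfl : i₀ = i := by rwa [Act.subject_map] at hi
    refine .single ⟨l₀, stepL_of_mem rfl ?_ (fun q hq => sysProj_st_congr (h.st_eq ?_))
      (h.chanStep.comap sigma_mk_injective)⟩
    · rwa [sysProj_st_of_ne _ hp, sysProj_st_of_ne _ hp]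
    · rw [Act.subject_map]; exact sigma_mk_injective.ne hq
  obtain rfl : i₀ = i := by rw [hsub] at hi; exact hi
  have hframe (q : P i₀) (hq : q ≠ hh i₀) : (sysProj c' i₀).st q = (sysProj c i₀).st q :=
    sysProj_st_congr (h.st_eq (hsub ▸ sigma_mk_injective.ne hq))
  rcases GWdelta_cases hδ with ⟨l₀, hsub₀, hδ₀, rfl, -⟩ | ⟨lk, -, hk, rfl, hsys⟩
  · refine .single ⟨l₀, stepL_of_mem hsub₀ (by simpa using hδ₀) hframe
      (h.chanStep.comap sigma_mk_injective)⟩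
  have hlk : lk.snd ≠ lk.rcv := (hK.wellFormed i₀ _ hk).2
  have hch : ∀ p q, ((⟨i₀, p⟩ : (j : I) × P j), (⟨i₀, q⟩ : (j : I) × P j)) ≠
      ((lk.map (interface hh)).snd, (lk.map (interface hh)).rcv) := by
    intro p q he
    simp only [Act.map, interface, Prod.mk.injEq, Sigma.mk.inj_iff] at he
    exact hlk (he.1.1.symm.trans he.2.1)
  refine (Config.ext (funext fun q => ?_) (h.chanStep.comap_eq hch) :
    sysProj c' i₀ = sysProj c i₀) ▸ .refl
  by_cases hq : q = hh i₀
  · subst hq; simpa using hsys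
  · exact hframe q hq

theorem polProj_reflGen_of_stepL (hwf : ∀ i, (S i).WellFormed) {c c' : Config (MC S hh Kd)}
    {l : Act ((j : I) × P j) A} (h : StepL (MC S hh Kd) c l c') :
    Relation.ReflGen (Step (policyCS S hh Kd)) (polProj c) (polProj c') := by
  rcases MC_stepL_cases h with ⟨i, p, hp, l₀, rfl, rfl, -⟩ | ⟨i, hsub, hδ⟩
  · refine polProj_eq_of_stepL h (fun j he => hp ?_) ▸ .refl
    rw [Act.subject_map] at he
    obtain ⟨rfl, he⟩ := Sigma.mk.inj_iff.1 he
    exact (eq_of_heq he).symm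
  have hframe (j : I) (hj : j ≠ i) : (polProj c').st j = (polProj c).st j :=
    polProj_st_congr (h.st_eq (hsub ▸ interface_injective.ne hj))
  rcases GWdelta_cases hδ with ⟨l₀, -, hδ₀, rfl, hpol⟩ | ⟨lk, hsubk, hk, rfl, -⟩
  · have hl₀ : l₀.snd ≠ l₀.rcv := (hwf i (hh i) _ hδ₀).2
    have hch : ∀ j j', (interface hh j, interface hh j') ≠
        ((l₀.map (Sigma.mk i)).snd, (l₀.map (Sigma.mk i)).rcv) := by
      intro j j' he
      simp only [Act.map, interface, Prod.mk.injEq, Sigma.mk.inj_iff] at he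
      obtain ⟨⟨rfl, h₁⟩, ⟨rfl, h₂⟩⟩ := he
      exact hl₀ ((eq_of_heq h₁).symm.trans (eq_of_heq h₂))
    refine (Config.ext (funext fun j => ?_) (h.chanStep.comap_eq (e := interface hh) hch) :
      polProj c' = polProj c) ▸ .refl
    by_cases hj : j = i
    · subst hj; exact hpol
    · exact hframe j hj
  · exact .single ⟨lk, stepL_of_mem hsubk hk hframe (h.chanStep.comap interface_injective)⟩

theorem sysProj_mem_RC {CM : Set (I × A × I)} (hK : IsConnPolicy S hh CM Kd)
    {c : Config (MC S hh Kd)} (hc : c ∈ RC (MC S hh Kd)) (i : I) : sysProj c i ∈ RC (S i) :=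
  map_mem_RC (sysProj · i) (sysProj_initConfig i)
    (fun _ _ ⟨_, h⟩ => sysProj_reflGen_of_stepL hK h i) hc

theorem polProj_mem_RC (hwf : ∀ i, (S i).WellFormed) {c : Config (MC S hh Kd)}
    (hc : c ∈ RC (MC S hh Kd)) : polProj c ∈ RC (policyCS S hh Kd) :=
  map_mem_RC polProj polProj_initConfig (fun _ _ ⟨_, h⟩ => polProj_reflGen_of_stepL hwf h) hc

theorem sysProj_st_of_inl {c : Config (MC S hh Kd)} {i : I} {q : (S i).St (hh i)}
    (hq : toGW S hh i (c.st ⟨i, hh i⟩) = .inl q) : (sysProj c i).st (hh i) = q := by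
  rw [sysProj_st_interface, hq]; rfl

theorem polProj_st_of_inl {c : Config (MC S hh Kd)} {i : I} {q : (S i).St (hh i)}
    (hq : toGW S hh i (c.st ⟨i, hh i⟩) = .inl q) : (polProj c).st i = q := by
  simp only [polProj, hq]; rfl

theorem exists_step_of_GWdelta {c : Config (MC S hh Kd)} {i : I} {l : Act ((j : I) × P j) A}
    {g' : GWState S hh i} (hδ : (toGW S hh i (c.st ⟨i, hh i⟩), l, g') ∈ GWdelta S hh Kd i)
    (hch : l.dir = .inp → ∃ w, c.ch l.snd l.rcv = l.msg :: w) :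
    ∃ c', Step (MC S hh Kd) c c' :=
  exists_step_of_mem (GWdelta_subject hδ) (y := ofGW i g')
    (mem_MC_delta_interface.2 (by rwa [toGW_ofGW])) hch

theorem exists_step_of_mem_local {c : Config (MC S hh Kd)} {i : I} {p : P i} (hp : p ≠ hh i)
    {l₀ : Act (P i) A} (hsub : l₀.subject = p) {y : (S i).St p}
    (hδ : (toLoc S hh hp (c.st ⟨i, p⟩), l₀, y) ∈ (S i).delta p)
    (hch : l₀.dir = .inp → ∃ w, c.ch ⟨i, l₀.snd⟩ ⟨i, l₀.rcv⟩ = l₀.msg :: w) :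
    ∃ c', Step (MC S hh Kd) c c' :=
  exists_step_of_mem (l := l₀.map (Sigma.mk i)) (by rw [Act.subject_map, hsub])
    (y := ofLoc hp y) ((mem_MC_delta_of_ne hp).2 ⟨l₀, by rwa [toLoc_ofLoc], rfl⟩) hch

theorem exists_step_of_toGW_eq_inr {c : Config (MC S hh Kd)} (hc : c ∈ RC (MC S hh Kd))
    {i : I} {t : (S i).St (hh i) × Act (P i) A × (S i).St (hh i)}
    (ht : toGW S hh i (c.st ⟨i, hh i⟩) = .inr t) : ∃ c', Step (MC S hh Kd) c c' := by
  rcases st_eq_init_or_mem_delta hc ⟨i, hh i⟩ with h₀ | ⟨x, l, hδ⟩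
  · rw [h₀, toGW_init] at ht; cases ht
  · rw [mem_MC_delta_interface, ht] at hδ
    obtain ⟨l', g', hδ', hout⟩ := GWdelta_exists_out_of_mem_inr hδ
    exact exists_step_of_GWdelta (ht ▸ hδ') fun h => absurd (hout.symm.trans h) nofun

theorem exists_step_of_sysProj_stepL {CM : Set (I × A × I)} (hK : IsConnPolicy S hh CM Kd)
    {c : Config (MC S hh Kd)} {i : I} {q : (S i).St (hh i)}
    (hq : toGW S hh i (c.st ⟨i, hh i⟩) = .inl q) {l₀ : Act (P i) A} {d : Config (S i)}
    (hs : StepL (S i) (sysProj c i) l₀ d) (hl₀ : ¬ (l₀.subject = hh i ∧ l₀.dir = .out)) :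
    ∃ c', Step (MC S hh Kd) c c' := by
  have hch : l₀.dir = .inp → ∃ w, c.ch ⟨i, l₀.snd⟩ ⟨i, l₀.rcv⟩ = l₀.msg :: w :=
    fun h => ⟨_, hs.ch_eq_cons h⟩
  by_cases hp : l₀.subject = hh i
  · obtain ⟨s, r, dir, a⟩ := l₀
    cases dir
    · exact absurd ⟨hp, rfl⟩ hl₀
    obtain rfl : r = hh i := hp
    have hδ := hs.mem_delta (p := hh i) rfl
    rw [sysProj_st_of_inl hq] at hδ
    -- the gateway receives the message itself; (*) provides the policy output forwarding it
    obtain ⟨j, -, -, hk⟩ := (hK i).1.1 q s a _ hδ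
    exact exists_step_of_GWdelta (l := ⟨⟨i, s⟩, ⟨i, hh i⟩, .inp, a⟩)
      (by rw [hq]; exact ⟨q, a, _, .inr ⟨s, j, hδ, hk, .inl rfl⟩⟩) hch
  · exact exists_step_of_mem_local hp rfl
      (by rw [← sysProj_st_of_ne c hp]; exact hs.mem_delta rfl) hch

theorem exists_step_of_polProj_stepL_inp {CM : Set (I × A × I)} (hK : IsConnPolicy S hh CM Kd)
    {c : Config (MC S hh Kd)} {i j : I} {a : A} {q : (S i).St (hh i)}
    (hq : toGW S hh i (c.st ⟨i, hh i⟩) = .inl q) {k : Config (policyCS S hh Kd)}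
    (hs : StepL (policyCS S hh Kd) (polProj c) ⟨j, i, .inp, a⟩ k) :
    ∃ c', Step (MC S hh Kd) c c' := by
  have hk := hs.mem_delta (p := i) rfl
  rw [polProj_st_of_inl hq] at hk
  rcases (hK i).mem_cases hk with ⟨_, _, he, -⟩ | ⟨_, _, he, -, r, hδ⟩ <;> cases he
  exact exists_step_of_GWdelta (l := ⟨⟨j, hh j⟩, ⟨i, hh i⟩, .inp, a⟩)
    (by rw [hq]; exact ⟨q, a, _, .inl ⟨r, j, hδ, hk, .inl rfl⟩⟩) fun _ => ⟨_, hs.ch_eq_cons rfl⟩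

theorem exists_step_of_interface_inp {CM : Set (I × A × I)} (hK : IsConnPolicy S hh CM Kd)
    {i : I} (hS : ProgressProp (S i)) (hnomix : NoMixed ((S i).delta (hh i)))
    {c : Config (MC S hh Kd)} (hc : sysProj c i ∈ RC (S i)) {q : (S i).St (hh i)}
    (hq : toGW S hh i (c.st ⟨i, hh i⟩) = .inl q) {l : Act (P i) A} {q' : (S i).St (hh i)}
    (hδ : (q, l, q') ∈ (S i).delta (hh i)) (hin : l.dir = .inp) :
    ∃ c', Step (MC S hh Kd) c c' := by
  obtain ⟨d, l₀, hs⟩ := (hS _ hc).resolve_right fun hfin =>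
    hfin (hh i) l q' (by rwa [sysProj_st_of_inl hq])
  refine exists_step_of_sysProj_stepL hK hq hs fun ⟨hsub, hout⟩ => hnomix q ?_
  exact ⟨⟨l₀, _, by rw [← sysProj_st_of_inl hq]; exact hs.mem_delta hsub, hout⟩, ⟨l, q', hδ, hin⟩⟩

theorem exists_step_of_polProj_stepL {CM : Set (I × A × I)} (hK : IsConnPolicy S hh CM Kd)
    (hS : ∀ i, ProgressProp (S i)) (hnomix : ∀ i, NoMixed ((S i).delta (hh i)))
    {c : Config (MC S hh Kd)} (hc : ∀ i, sysProj c i ∈ RC (S i))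
    (hidle : ∀ i, ∃ q, toGW S hh i (c.st ⟨i, hh i⟩) = .inl q) {lk : Act I A}
    {k : Config (policyCS S hh Kd)} (hs : StepL (policyCS S hh Kd) (polProj c) lk k) :
    ∃ c', Step (MC S hh Kd) c c' := by
  obtain ⟨j, i, dir, a⟩ := lk
  cases dir with
  | inp =>
    obtain ⟨q, hq⟩ := hidle i
    exact exists_step_of_polProj_stepL_inp hK hq hs
  | out =>
    obtain ⟨q, hq⟩ := hidle j
    have hk := hs.mem_delta (p := j) rfl
    rw [polProj_st_of_inl hq] at hk
    -- by minimality the policy only outputs what its interface has received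
    rcases (hK j).mem_cases hk with ⟨_, _, -, -, r, hδ⟩ | ⟨_, _, he, -⟩
    · exact exists_step_of_interface_inp hK (hS j) (hnomix j) (hc j) hq hδ rfl
    · cases he

theorem exists_step_of_interface_out {CM : Set (I × A × I)} (hK : IsConnPolicy S hh CM Kd)
    (hS : ∀ i, ProgressProp (S i)) (hnomix : ∀ i, NoMixed ((S i).delta (hh i)))
    (hKprog : ProgressProp (policyCS S hh Kd)) {c : Config (MC S hh Kd)}
    (hc : ∀ i, sysProj c i ∈ RC (S i)) (hck : polProj c ∈ RC (policyCS S hh Kd))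
    (hidle : ∀ i, ∃ q, toGW S hh i (c.st ⟨i, hh i⟩) = .inl q) {i : I} {q q' : (S i).St (hh i)}
    (hq : toGW S hh i (c.st ⟨i, hh i⟩) = .inl q) {l : Act (P i) A}
    (hδ : (q, l, q') ∈ (S i).delta (hh i)) (hsub : l.subject = hh i) (hout : l.dir = .out) :
    ∃ c', Step (MC S hh Kd) c c' := by
  obtain ⟨s, r, dir, a⟩ := l
  obtain rfl : dir = .out := hout
  obtain rfl : s = hh i := hsub
  -- by (**) the policy can take the message from the interface, so it is not in a final state
  obtain ⟨j, -, -, hk⟩ := (hK i).1.2 q r a q' hδ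
  obtain ⟨k, lk, hks⟩ := (hKprog _ hck).resolve_right fun hfin =>
    hfin i _ _ (by rwa [polProj_st_of_inl hq])
  exact exists_step_of_polProj_stepL hK hS hnomix hc hidle hks

theorem final_of_sysProj_final {c : Config (MC S hh Kd)}
    (hidle : ∀ i, ∃ q, toGW S hh i (c.st ⟨i, hh i⟩) = .inl q)
    (hfin : ∀ i p, FinalSt ((S i).delta p) ((sysProj c i).st p)) (x : (i : I) × P i) :
    FinalSt ((MC S hh Kd).delta x) (c.st x) := by
  obtain ⟨i, p⟩ := x
  intro l y hδ
  by_cases hp : p = hh i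
  · subst hp
    obtain ⟨q, hq⟩ := hidle i
    rw [mem_MC_delta_interface, hq] at hδ
    exact GWdelta_final_inl (by rw [← sysProj_st_of_inl hq]; exact hfin i (hh i)) _ _ hδ
  · obtain ⟨l₀, hδ₀, -⟩ := (mem_MC_delta_of_ne hp).1 hδ
    exact hfin i p l₀ _ (by rw [sysProj_st_of_ne c hp]; exact hδ₀)

end Multicomposition

end CFSM

open CFSM in
theorem progress_preserved_by_multicomposition_general
    {I : Type} {P : I → Type} {A : Type}
    (S : ∀ i, CS (P i) A)
    (hwf : ∀ i, (S i).WellFormed)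
    (hh : ∀ i, P i)
    (hnomix : ∀ i, NoMixed ((S i).delta (hh i)))
    (CM : Set (I × A × I))
    (Kd : ∀ i, Set ((S i).St (hh i) × Act I A × (S i).St (hh i)))
    (hK : IsConnPolicy S hh CM Kd)
    (hS : ∀ i, ProgressProp (S i))
    (hKfree : ProgressProp (policyCS S hh Kd)) :
    ProgressProp (MC S hh Kd) := by
  intro c hc
  by_cases hbusy : ∃ i t, toGW S hh i (c.st ⟨i, hh i⟩) = .inr t
  · obtain ⟨i, t, ht⟩ := hbusy
    exact .inl (exists_step_of_toGW_eq_inr hc ht)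
  have hidle : ∀ i, ∃ q, toGW S hh i (c.st ⟨i, hh i⟩) = .inl q := fun i => by
    cases h : toGW S hh i (c.st ⟨i, hh i⟩) with
    | inl q => exact ⟨q, rfl⟩
    | inr t => exact absurd ⟨i, t, h⟩ hbusy
  have hsys := sysProj_mem_RC hK hc
  by_cases hfin : ∀ i p, FinalSt ((S i).delta p) ((sysProj c i).st p)
  · exact .inr (final_of_sysProj_final hidle hfin)
  obtain ⟨i, p, hp⟩ : ∃ i p, ¬ FinalSt ((S i).delta p) ((sysProj c i).st p) := by
    simpa using hfin
  obtain ⟨d, l₀, hs⟩ := (hS i _ (hsys i)).resolve_right fun h => hp (h p)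
  obtain ⟨q, hq⟩ := hidle i
  by_cases hout : l₀.subject = hh i ∧ l₀.dir = .out
  · have hδ := hs.mem_delta hout.1
    rw [sysProj_st_of_inl hq] at hδ
    exact .inl (exists_step_of_interface_out hK hS hnomix hKfree hsys (polProj_mem_RC hwf hc)
      hidle hq hδ hout.1 hout.2)
  · exact .inl (exists_step_of_sysProj_stepL hK hq hs hout)

open CFSM in
/-- PaI multicomposition preserves the progress property, provided the
interfaces have no mixed states and the connection policy satisfies progress. -/
theorem progress_preserved_by_multicomposition
    {I : Type} [Finite I] {P : I → Type} [∀ i, Finite (P i)] {A : Type} [Finite A]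
    (S : ∀ i, CS (P i) A)
    (hfin : ∀ i p, Finite ((S i).St p))
    (hwf : ∀ i, (S i).WellFormed)
    (hh : ∀ i, P i)
    (hnomix : ∀ i, NoMixed ((S i).delta (hh i)))
    (CM : Set (I × A × I)) (hCM : IsConnModel S hh CM)
    (Kd : ∀ i, Set ((S i).St (hh i) × Act I A × (S i).St (hh i)))
    (hK : IsConnPolicy S hh CM Kd)
    (hS : ∀ i, ProgressProp (S i))
    (hKfree : ProgressProp (policyCS S hh Kd)) :
    ProgressProp (MC S hh Kd) :=
  progress_preserved_by_multicomposition_general S hwf hh hnomix CM Kd hK hS hKfree
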